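/- arXiv:1005.4588 — 2 statements merged into one kernel-verified Lean document; each statement's English description precedes it below -/
import Mathlib

section
/- Let n ≥ 3, λ = 2·cot(π/n), T = [[1, λ],[0, 1]] and R the rotation matrix by π/n. Then (T⁻¹·R²)² = R⁻¹·T²·R. -/
/-!
Put `U = R T⁻¹`. Then `det U = 1` and `tr U = 2 cos θ - λ sin θ = 0` for `λ = 2 cot θ`, so
Cayley–Hamilton gives `U² = -1`, i.e. `R T⁻¹ R = -T`. Hence
`R (T⁻¹ R²)² = (R T⁻¹ R)² R = T² R`, and cancelling `R` gives the relation.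
-/

open Real Matrix

namespace Matrix

variable {K : Type*} [CommRing K]

theorem sq_eq_neg_one_of_trace_eq_zero_of_det_eq_one [Nontrivial K]
    {U : Matrix (Fin 2) (Fin 2) K} (htr : U.trace = 0) (hdet : U.det = 1) : U ^ 2 = -1 := by
  have hCH := U.aeval_self_charpoly
  rw [charpoly_fin_two, htr, hdet] at hCH
  simpa [eq_neg_iff_add_eq_zero] using hCH

theorem inv_unitriangular_fin_two (a : K) : (!![1, a; 0, 1])⁻¹ = !![1, -a; 0, 1] :=
  inv_eq_left_inv (by simp [one_fin_two])

variable {n : Type*} [Fintype n] [DecidableEq n]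

theorem inv_mul_sq_sq_of_sq_mul_inv_eq_neg_one {T R : Matrix n n K} (hT : IsUnit T.det)
    (hR : IsUnit R.det) (h : (R * T⁻¹) ^ 2 = -1) : (T⁻¹ * R ^ 2) ^ 2 = R⁻¹ * T ^ 2 * R := by
  have hRTR : R * T⁻¹ * R = -T := by
    calc R * T⁻¹ * R = (R * T⁻¹) ^ 2 * T := by
          simp only [sq, mul_assoc, nonsing_inv_mul T hT, mul_one]
      _ = -T := by rw [h, neg_one_mul]
  calc (T⁻¹ * R ^ 2) ^ 2 = R⁻¹ * ((R * T⁻¹ * R) * (R * T⁻¹ * R) * R) := by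
        rw [← nonsing_inv_mul_cancel_left R ((T⁻¹ * R ^ 2) ^ 2) hR]
        simp only [sq, mul_assoc]
    _ = R⁻¹ * T ^ 2 * R := by rw [hRTR, neg_mul_neg, sq, mul_assoc R⁻¹]

end Matrix

theorem inv_mul_rotation_sq_sq_of_sin_ne_zero {θ : ℝ} (hθ : sin θ ≠ 0)
    {T R : Matrix (Fin 2) (Fin 2) ℝ} (hT : T = !![1, 2 * cot θ; 0, 1])
    (hR : R = !![cos θ, -sin θ; sin θ, cos θ]) :
    (T⁻¹ * R ^ 2) ^ 2 = R⁻¹ * T ^ 2 * R := by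
  have hTdet : T.det = 1 := by simp [hT, det_fin_two_of]
  have hRdet : R.det = 1 := by simp [hR, det_fin_two_of, ← sq, cos_sq_add_sin_sq]
  refine inv_mul_sq_sq_of_sq_mul_inv_eq_neg_one (by simp [hTdet]) (by simp [hRdet]) ?_
  apply sq_eq_neg_one_of_trace_eq_zero_of_det_eq_one
  · rw [hT, hR, inv_unitriangular_fin_two, mul_fin_two, trace_fin_two_of, cot_eq_cos_div_sin]
    field_simp
    ring
  · rw [det_mul, det_nonsing_inv, hTdet, hRdet, Ring.inverse_one, mul_one]

theorem stmt_3 (n : ℕ) (hn : 3 ≤ n)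
    (lam : ℝ) (hlam : lam = 2 * Real.cot (π / n))
    (T R : Matrix (Fin 2) (Fin 2) ℝ)
    (hT : T = !![1, lam; 0, 1])
    (hR : R = !![Real.cos (π / n), -Real.sin (π / n);
                 Real.sin (π / n),  Real.cos (π / n)]) :
    (T⁻¹ * R ^ 2) ^ 2 = R⁻¹ * T ^ 2 * R := by
  have hn1 : (1 : ℝ) < n := by exact_mod_cast (by omega : 1 < n)
  have hsin : sin (π / n) ≠ 0 :=
    (sin_pos_of_pos_of_lt_pi (by positivity) (div_lt_self pi_pos hn1)).ne'
  exact inv_mul_rotation_sq_sq_of_sin_ne_zero hsin (hlam ▸ hT) hR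
end

section
/- Let F be the free group on generators R, T and let U ≤ F be the subgroup generated by {Rⁿ, T, R·T·R^{-(n-1)}, R²·T·R^{-(n-2)}, ..., R^{n-1}·T·R^{-1}} for n ≥ 2. Then U has index n in F and {1, R, R², ..., R^{n-1}} is a complete set of right coset representatives for U in F. -/
/-!
Let `F` act on `ℤ/n` through the dihedral group, `R` rotating by `-1` and `T` acting as `x ↦ -x`.
Every generator of `U` fixes `0`; conversely, with `rₓ = R ^ x` (so that `rₓ⁻¹ • 0 = x`), every
Schreier element `rₓ · s · (r_{s⁻¹ • x})⁻¹` of a generator `s ∈ {R, T}` is `1`, `Rⁿ`, `T` or one of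
the elements `Rʲ T R^{-(n-j)}`. Hence all Schreier elements lie in `U`, which forces the stabilizer
of `0` into `U`, so `U` is exactly that stabilizer. Its right cosets are then labelled by the orbit
`ℤ/n` via `U g ↦ g⁻¹ • 0`, with representative `r_{g⁻¹ • 0}`.
-/

open FreeGroup MulAction

namespace MulAction

variable {G X : Type*} [Group G] [MulAction G X]

theorem mul_mul_inv_smul_mem_of_closure_eq_top {U : Subgroup G} {S : Set G}
    (hS : Subgroup.closure S = ⊤) (r : X → G)
    (hgen : ∀ s ∈ S, ∀ x, r x * s * (r (s⁻¹ • x))⁻¹ ∈ U) (g : G) (x : X) :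
    r x * g * (r (g⁻¹ • x))⁻¹ ∈ U := by
  have hg : g ∈ Subgroup.closure S := hS ▸ Subgroup.mem_top g
  induction hg using Subgroup.closure_induction generalizing x with
  | mem s hs => exact hgen s hs x
  | one => simp
  | mul a b _ _ ha hb =>
    simpa only [mul_inv_rev, mul_smul, mul_assoc, inv_mul_cancel_left]
      using U.mul_mem (ha x) (hb (a⁻¹ • x))
  | inv a _ ha =>
    simpa only [mul_inv_rev, inv_inv, inv_smul_smul, mul_assoc] using U.inv_mem (ha (a • x))

theorem stabilizer_le_of_mul_mul_inv_smul_mem {U : Subgroup G} (r : X → G) {x₀ : X}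
    (hr₀ : r x₀ = 1) (h : ∀ g, r x₀ * g * (r (g⁻¹ • x₀))⁻¹ ∈ U) : stabilizer G x₀ ≤ U := by
  intro g hg
  have hg' : g⁻¹ • x₀ = x₀ := inv_smul_eq_iff.mpr (mem_stabilizer_iff.mp hg).symm
  simpa [hr₀, hg'] using h g

variable (r : X → G) {x₀ : X}

theorem index_stabilizer_of_inv_smul_eq (hr : ∀ x, (r x)⁻¹ • x₀ = x) :
    (stabilizer G x₀).index = Nat.card X := by
  have horbit : orbit G x₀ = Set.univ :=
    Set.eq_univ_of_forall fun x => ⟨(r x)⁻¹, hr x⟩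
  rw [index_stabilizer, horbit, Set.ncard_univ]

theorem existsUnique_mem_stabilizer_mul (hr : ∀ x, (r x)⁻¹ • x₀ = x) (g : G) :
    ∃! x, ∃ u ∈ stabilizer G x₀, g = u * r x := by
  refine ⟨g⁻¹ • x₀, ⟨g * (r (g⁻¹ • x₀))⁻¹, ?_, by group⟩, ?_⟩
  · rw [mem_stabilizer_iff, mul_smul, hr, smul_inv_smul]
  · rintro x ⟨u, hu, rfl⟩
    rw [mul_inv_rev, mul_smul, inv_smul_eq_iff.mpr (mem_stabilizer_iff.mp hu).symm, hr]

end MulAction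

theorem ZMod.val_finEquiv (n : ℕ) [NeZero n] (j : Fin n) : (ZMod.finEquiv n j).val = j := by
  obtain ⟨k, rfl⟩ : ∃ k, n = k + 1 := Nat.exists_eq_succ_of_ne_zero (NeZero.ne n)
  rfl

/-- `of true` rotates by `-1`, so that `(of true ^ j)⁻¹` moves `0` to `j`. -/
def dihedralPerm (n : ℕ) : FreeGroup Bool →* Equiv.Perm (ZMod n) :=
  FreeGroup.lift fun b => if b then Equiv.subRight 1 else Equiv.neg _

abbrev dihedralAction (n : ℕ) : MulAction (FreeGroup Bool) (ZMod n) :=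
  MulAction.compHom _ (dihedralPerm n)

attribute [local instance] dihedralAction

namespace dihedralAction

variable {n : ℕ}

theorem of_true_smul (x : ZMod n) : of true • x = x - 1 := by
  change dihedralPerm n (of true) x = x - 1
  simp [dihedralPerm]

theorem of_false_smul (x : ZMod n) : of false • x = -x := by
  change dihedralPerm n (of false) x = -x
  simp [dihedralPerm]

theorem of_true_pow_smul (m : ℕ) (x : ZMod n) : of true ^ m • x = x - m := by
  induction m with
  | zero => simp
  | succ m ih => rw [pow_succ', mul_smul, of_true_smul, ih]; push_cast; ring

theorem inv_of_true_pow_smul_zero (m : ℕ) : (of true ^ m)⁻¹ • (0 : ZMod n) = m := by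
  rw [inv_smul_eq_iff, of_true_pow_smul, sub_self]

end dihedralAction

open dihedralAction

def schreierSubgroup (n : ℕ) : Subgroup (FreeGroup Bool) :=
  Subgroup.closure ({of true ^ n, of false} ∪
    {x | ∃ j : ℕ, 1 ≤ j ∧ j < n ∧ x = of true ^ j * of false * (of true ^ (n - j))⁻¹})

namespace schreierSubgroup

variable {n : ℕ}

theorem of_true_pow_mem : of true ^ n ∈ schreierSubgroup n :=
  Subgroup.subset_closure (Or.inl (Or.inl rfl))

theorem of_false_mem : of false ∈ schreierSubgroup n :=
  Subgroup.subset_closure (Or.inl (Or.inr rfl))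

theorem conj_mem {j : ℕ} (hj₁ : 1 ≤ j) (hj : j < n) :
    of true ^ j * of false * (of true ^ (n - j))⁻¹ ∈ schreierSubgroup n :=
  Subgroup.subset_closure (Or.inr ⟨j, hj₁, hj, rfl⟩)

theorem le_stabilizer (n : ℕ) : schreierSubgroup n ≤ stabilizer (FreeGroup Bool) (0 : ZMod n) := by
  rw [schreierSubgroup, Subgroup.closure_le]
  rintro x ((rfl | rfl) | ⟨j, -, hj, rfl⟩) <;> rw [SetLike.mem_coe, mem_stabilizer_iff]
  · rw [of_true_pow_smul, ZMod.natCast_self, sub_self]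
  · rw [of_false_smul, neg_zero]
  · rw [mul_smul, mul_smul, inv_of_true_pow_smul_zero, of_false_smul, of_true_pow_smul,
      Nat.cast_sub hj.le, ZMod.natCast_self]
    ring

variable [NeZero n]

theorem mul_of_true_mul_inv_mem (x : ZMod n) :
    of true ^ x.val * of true * (of true ^ ((of true)⁻¹ • x).val)⁻¹ ∈ schreierSubgroup n := by
  have hinv : (of true)⁻¹ • x = ((x.val + 1 : ℕ) : ZMod n) := by
    rw [inv_smul_eq_iff, of_true_smul, Nat.cast_succ, ZMod.natCast_zmod_val, add_sub_cancel_right]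
  rw [hinv, ZMod.val_natCast, ← pow_succ]
  rcases Nat.lt_or_ge (x.val + 1) n with hlt | hge
  · rw [Nat.mod_eq_of_lt hlt, mul_inv_cancel]
    exact one_mem _
  · rw [show x.val + 1 = n by have := ZMod.val_lt x; omega, Nat.mod_self, pow_zero, inv_one, mul_one]
    exact of_true_pow_mem

theorem mul_of_false_mul_inv_mem (x : ZMod n) :
    of true ^ x.val * of false * (of true ^ ((of false)⁻¹ • x).val)⁻¹ ∈ schreierSubgroup n := by
  have hinv : (of false)⁻¹ • x = -x := by rw [inv_smul_eq_iff, of_false_smul, neg_neg]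
  rw [hinv, ZMod.neg_val]
  by_cases hx : x = 0
  · simpa [hx] using of_false_mem
  · rw [if_neg hx]
    exact conj_mem (Nat.one_le_iff_ne_zero.mpr ((ZMod.val_ne_zero x).mpr hx)) (ZMod.val_lt x)

theorem stabilizer_eq : stabilizer (FreeGroup Bool) (0 : ZMod n) = schreierSubgroup n := by
  let r (x : ZMod n) := of true ^ x.val
  refine le_antisymm (stabilizer_le_of_mul_mul_inv_smul_mem r (by simp [r])
    (mul_mul_inv_smul_mem_of_closure_eq_top (closure_range_of Bool) r ?_ · 0)) (le_stabilizer n)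
  rintro _ ⟨(_ | _), rfl⟩ x
  · exact mul_of_false_mul_inv_mem x
  · exact mul_of_true_mul_inv_mem x

end schreierSubgroup

theorem stmt_19 (n : ℕ) (hn : 2 ≤ n)
    (R T : FreeGroup Bool) (hR : R = FreeGroup.of true) (hT : T = FreeGroup.of false)
    (U : Subgroup (FreeGroup Bool))
    (hU : U = Subgroup.closure
      ({R ^ n, T} ∪ {x | ∃ j : ℕ, 1 ≤ j ∧ j < n ∧ x = R ^ j * T * (R ^ (n - j))⁻¹})) :
    U.index = n ∧
      ∀ g : FreeGroup Bool, ∃! j : Fin n, ∃ u ∈ U, g = u * R ^ (j : ℕ) := by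
  subst hR hT
  have : NeZero n := ⟨by omega⟩
  have hr (x : ZMod n) : (of true ^ x.val)⁻¹ • (0 : ZMod n) = x := by
    rw [dihedralAction.inv_of_true_pow_smul_zero, ZMod.natCast_zmod_val]
  rw [show U = stabilizer (FreeGroup Bool) (0 : ZMod n) from hU.trans schreierSubgroup.stabilizer_eq.symm]
  refine ⟨by rw [index_stabilizer_of_inv_smul_eq _ hr, Nat.card_zmod], fun g => ?_⟩
  refine ((ZMod.finEquiv n).toEquiv.existsUnique_congr fun j => ?_).mpr
    (existsUnique_mem_stabilizer_mul _ hr g)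
  rw [RingEquiv.toEquiv_eq_coe, RingEquiv.coe_toEquiv, ZMod.val_finEquiv]
end
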